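/- arXiv:1912.07151 — 3 statements merged into one kernel-verified Lean document; each statement's English description precedes it below -/
import Mathlib

section
/- Let d ≥ 1 and t ≥ 1 be integers, and let X = (x_i)_{i∈I} and Y = (y_j)_{j∈J} be finite families of nonzero vectors in ℂ^d, each of which is a spherical (t,t)-design. Then their disjoint union X ∪ Y (the concatenated family indexed by I ⊕ J) is also a spherical (t,t)-design. -/
/-!
By the multinomial theorem, the degree-`t` monomials weighted by `√(multinomial coefficient)` give
a map `ψ` into `ℂ^{Sym^t(Fin d)}` with `⟪ψ x, ψ y⟫ = ⟪x, y⟫ ^ t`. So a family `X` is a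
`(t,t)`-design exactly when the frame matrix `S = ∑ ψ(xᵢ) ψ(xᵢ)ᴴ` attains equality in
`‖S‖_F² ≥ |tr S|² / N`, where `N = (t+d-1 choose t)` is the number of monomials; by Cauchy–Schwarz
this happens iff `S` is a scalar matrix. Frame matrices add under disjoint union, and a sum of scalar
matrices is scalar.
-/

open scoped BigOperators

/-- `c_t(ℂ^d) = 1 / (t+d-1 choose t)`. -/
noncomputable def designConst (d t : ℕ) : ℝ := 1 / (Nat.choose (t + d - 1) t : ℝ)

/-- A finite family of vectors in `ℂ^d` is a spherical `(t,t)`-design if it gives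
equality in the Welch-type bound. -/
def IsSphericalDesign (d t : ℕ) {ι : Type*} [Fintype ι]
    (x : ι → EuclideanSpace ℂ (Fin d)) : Prop :=
  ∑ i, ∑ j, ‖(inner ℂ (x i) (x j) : ℂ)‖ ^ (2 * t) =
    designConst d t * (∑ i, ‖x i‖ ^ (2 * t)) ^ 2

open scoped ComplexConjugate ComplexOrder InnerProductSpace
open Matrix

section SymTensorPow

variable {𝕜 α : Type*} [RCLike 𝕜] [Fintype α] [DecidableEq α]

/-- The coordinates of `x ⊗ ⋯ ⊗ x` in an orthonormal basis of the symmetric tensors. -/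
noncomputable def symTensorPow (t : ℕ) (x : EuclideanSpace 𝕜 α) : EuclideanSpace 𝕜 (Sym α t) :=
  WithLp.toLp 2 fun m => (√(m.1.countPerms : ℝ) : 𝕜) * (m.1.map x).prod

theorem inner_symTensorPow (t : ℕ) (x y : EuclideanSpace 𝕜 α) :
    ⟪symTensorPow t x, symTensorPow t y⟫_𝕜 = ⟪x, y⟫_𝕜 ^ t := by
  simp only [PiLp.inner_apply, RCLike.inner_apply, symTensorPow]
  rw [Finset.sum_pow, Finset.sym_univ]
  refine Finset.sum_congr rfl fun m _ => ?_
  have hw : (√(m.1.countPerms : ℝ) : 𝕜) * conj (√(m.1.countPerms : ℝ) : 𝕜) = m.1.countPerms := by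
    rw [RCLike.conj_ofReal, ← RCLike.ofReal_mul, Real.mul_self_sqrt (Nat.cast_nonneg _)]
    simp
  simp only [map_mul, map_multiset_prod, Multiset.map_map, Function.comp_def,
    Multiset.prod_map_mul, ← hw]
  ring

theorem norm_symTensorPow (t : ℕ) (x : EuclideanSpace 𝕜 α) :
    ‖symTensorPow t x‖ = ‖x‖ ^ t := by
  have h := congrArg RCLike.re (inner_symTensorPow t x x)
  rw [inner_self_eq_norm_sq, inner_self_eq_norm_sq_to_K, ← RCLike.ofReal_pow, ← RCLike.ofReal_pow,
    RCLike.ofReal_re, ← pow_mul, pow_mul'] at h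
  exact (pow_left_inj₀ (norm_nonneg _) (by positivity) two_ne_zero).1 h

end SymTensorPow

namespace Matrix

variable {𝕜 m n : Type*} [RCLike 𝕜] [Fintype m] [Fintype n]

theorem trace_conjTranspose_mul_self_eq_sum_norm_sq (A : Matrix m n 𝕜) :
    (Aᴴ * A).trace = ((∑ i, ∑ j, ‖A i j‖ ^ 2 : ℝ) : 𝕜) := by
  simp only [trace, diag_apply, mul_apply, conjTranspose_apply, RCLike.star_def, RCLike.conj_mul]
  push_cast
  exact Finset.sum_comm

theorem sum_norm_sq_eq_zero_iff (A : Matrix m n 𝕜) : ∑ i, ∑ j, ‖A i j‖ ^ 2 = 0 ↔ A = 0 := by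
  rw [← RCLike.ofReal_eq_zero (K := 𝕜), ← trace_conjTranspose_mul_self_eq_sum_norm_sq,
    trace_conjTranspose_mul_self_eq_zero_iff]

theorem sum_norm_sq_sub_trace_div_smul_one [DecidableEq n] [Nonempty n] (A : Matrix n n 𝕜) :
    ∑ i, ∑ j, ‖(A - (A.trace / Fintype.card n) • 1) i j‖ ^ 2 =
      ∑ i, ∑ j, ‖A i j‖ ^ 2 - ‖A.trace‖ ^ 2 / Fintype.card n := by
  have hN : (Fintype.card n : 𝕜) ≠ 0 := Nat.cast_ne_zero.2 Fintype.card_ne_zero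
  apply RCLike.ofReal_injective (K := 𝕜)
  rw [← trace_conjTranspose_mul_self_eq_sum_norm_sq, RCLike.ofReal_sub, RCLike.ofReal_div, ← trace_conjTranspose_mul_self_eq_sum_norm_sq,
    RCLike.ofReal_pow, ← RCLike.conj_mul, RCLike.ofReal_natCast]
  simp only [conjTranspose_sub, conjTranspose_smul, conjTranspose_one, sub_mul, mul_sub,
    smul_mul, Matrix.mul_smul, Matrix.mul_one, one_mul, trace_sub, trace_smul, trace_one,
    trace_conjTranspose, smul_eq_mul, RCLike.star_def, map_div₀, map_natCast]
  field_simp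
  ring

theorem sum_norm_sq_eq_iff_exists_eq_smul_one [DecidableEq n] (A : Matrix n n 𝕜) :
    ∑ i, ∑ j, ‖A i j‖ ^ 2 = ‖A.trace‖ ^ 2 / Fintype.card n ↔ ∃ a : 𝕜, A = a • 1 := by
  cases isEmpty_or_nonempty n
  · simp only [Finset.univ_eq_empty, Finset.sum_empty, Fintype.card_eq_zero, Nat.cast_zero,
      div_zero, true_iff]
    exact ⟨0, Subsingleton.elim _ _⟩
  rw [← sub_eq_zero, ← sum_norm_sq_sub_trace_div_smul_one, sum_norm_sq_eq_zero_iff, sub_eq_zero]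
  refine ⟨fun h => ⟨_, h⟩, ?_⟩
  rintro ⟨a, rfl⟩
  have hN : (Fintype.card n : 𝕜) ≠ 0 := Nat.cast_ne_zero.2 Fintype.card_ne_zero
  rw [trace_smul, trace_one, smul_eq_mul, mul_div_cancel_right₀ _ hN]

end Matrix

section Frame

variable {𝕜 ν ι κ : Type*} [RCLike 𝕜] [Fintype ι] [Fintype κ]

def synthesisMatrix (v : ι → EuclideanSpace 𝕜 ν) : Matrix ν ι 𝕜 := of fun m i => v i m

def frameMatrix (v : ι → EuclideanSpace 𝕜 ν) : Matrix ν ν 𝕜 :=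
  synthesisMatrix v * (synthesisMatrix v)ᴴ

/-- The frame bound `a` may be `0`, as for a family of zero vectors. -/
def IsTightFrame [DecidableEq ν] (v : ι → EuclideanSpace 𝕜 ν) : Prop :=
  ∃ a : 𝕜, frameMatrix v = a • 1

theorem frameMatrix_sum_elim (v : ι → EuclideanSpace 𝕜 ν) (w : κ → EuclideanSpace 𝕜 ν) :
    frameMatrix (Sum.elim v w) = frameMatrix v + frameMatrix w := by
  ext m m'
  simp [frameMatrix, synthesisMatrix, mul_apply, Fintype.sum_sum_type]

theorem IsTightFrame.sum_elim [DecidableEq ν] {v : ι → EuclideanSpace 𝕜 ν}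
    {w : κ → EuclideanSpace 𝕜 ν} (hv : IsTightFrame v) (hw : IsTightFrame w) :
    IsTightFrame (Sum.elim v w) := by
  obtain ⟨a, ha⟩ := hv
  obtain ⟨b, hb⟩ := hw
  exact ⟨a + b, by rw [frameMatrix_sum_elim, ha, hb, add_smul]⟩

variable [Fintype ν]

omit [Fintype ι] in
theorem gram_eq_conjTranspose_synthesisMatrix_mul (v : ι → EuclideanSpace 𝕜 ν) :
    gram 𝕜 v = (synthesisMatrix v)ᴴ * synthesisMatrix v := by
  ext i j
  simp [synthesisMatrix, mul_apply, PiLp.inner_apply, mul_comm]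

theorem trace_frameMatrix (v : ι → EuclideanSpace 𝕜 ν) :
    (frameMatrix v).trace = ((∑ i, ‖v i‖ ^ 2 : ℝ) : 𝕜) := by
  rw [frameMatrix, trace_mul_comm, ← gram_eq_conjTranspose_synthesisMatrix_mul, trace]
  push_cast
  exact Finset.sum_congr rfl fun i _ => inner_self_eq_norm_sq_to_K (v i)

/-- `‖Vᴴ V‖_F = ‖V Vᴴ‖_F`, with `V` the synthesis matrix. -/
theorem sum_norm_inner_sq_eq_sum_norm_frameMatrix_sq (v : ι → EuclideanSpace 𝕜 ν) :
    ∑ i, ∑ j, ‖⟪v i, v j⟫_𝕜‖ ^ 2 = ∑ m, ∑ m', ‖frameMatrix v m m'‖ ^ 2 := by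
  apply RCLike.ofReal_injective (K := 𝕜)
  change ((∑ i, ∑ j, ‖gram 𝕜 v i j‖ ^ 2 : ℝ) : 𝕜) = _
  rw [← trace_conjTranspose_mul_self_eq_sum_norm_sq, ← trace_conjTranspose_mul_self_eq_sum_norm_sq,
    frameMatrix, gram_eq_conjTranspose_synthesisMatrix_mul]
  simp only [conjTranspose_mul, conjTranspose_conjTranspose, Matrix.mul_assoc]
  rw [trace_mul_comm]
  simp only [Matrix.mul_assoc]

theorem isTightFrame_iff_sum_norm_inner_sq [DecidableEq ν] (v : ι → EuclideanSpace 𝕜 ν) :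
    IsTightFrame v ↔
      ∑ i, ∑ j, ‖⟪v i, v j⟫_𝕜‖ ^ 2 = (∑ i, ‖v i‖ ^ 2) ^ 2 / Fintype.card ν := by
  rw [IsTightFrame, ← sum_norm_sq_eq_iff_exists_eq_smul_one, trace_frameMatrix,
    sum_norm_inner_sq_eq_sum_norm_frameMatrix_sq, RCLike.norm_ofReal,
    abs_of_nonneg (by positivity)]

end Frame

theorem isSphericalDesign_iff_isTightFrame (d t : ℕ) {ι : Type*} [Fintype ι]
    (x : ι → EuclideanSpace ℂ (Fin d)) :
    IsSphericalDesign d t x ↔ IsTightFrame (symTensorPow t ∘ x) := by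
  rw [isTightFrame_iff_sum_norm_inner_sq, IsSphericalDesign, designConst, Sym.card_sym_eq_choose,
    Fintype.card_fin, add_comm d t, one_div_mul_eq_div]
  simp only [Function.comp_apply, inner_symTensorPow, norm_symTensorPow, norm_pow, ← pow_mul,
    mul_comm t 2]

theorem union_of_spherical_designs_general (d t : ℕ)
    {ι κ : Type*} [Fintype ι] [Fintype κ]
    (x : ι → EuclideanSpace ℂ (Fin d)) (y : κ → EuclideanSpace ℂ (Fin d))
    (hX : IsSphericalDesign d t x) (hY : IsSphericalDesign d t y) :
    IsSphericalDesign d t (Sum.elim x y) := by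
  rw [isSphericalDesign_iff_isTightFrame] at hX hY ⊢
  rw [Sum.comp_elim]
  exact hX.sum_elim hY

/-- The disjoint union of two spherical `(t,t)`-designs is a spherical `(t,t)`-design. -/
theorem union_of_spherical_designs (d t : ℕ) (hd : 1 ≤ d) (ht : 1 ≤ t)
    {ι κ : Type*} [Fintype ι] [Fintype κ]
    (x : ι → EuclideanSpace ℂ (Fin d)) (y : κ → EuclideanSpace ℂ (Fin d))
    (hx : ∀ i, x i ≠ 0) (hy : ∀ j, y j ≠ 0)
    (hX : IsSphericalDesign d t x) (hY : IsSphericalDesign d t y) :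
    IsSphericalDesign d t (Sum.elim x y) :=
  union_of_spherical_designs_general d t x y hX hY
end

section
/- Let d ≥ 1 and t ≥ 1 be integers, and let (X, w^X) = ((x_i), (w_i^X))_{i∈I} and (Y, w^Y) = ((y_j), (w_j^Y))_{j∈J} be weighted spherical (t,t)-designs for ℂ^d. Then b_{XY}^{(t)} := ∑_{i∈I}∑_{j∈J} w_i^X w_j^Y |⟨x_i, y_j⟩|^{2t} = c_t(ℂ^d). -/
open scoped BigOperators

/-- A weighted spherical `(t,t)`-design for `ℂ^d`: a finite family of unit vectors
with real weights summing to `1` satisfying the variational characterisation. -/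
def IsWeightedDesign (d t : ℕ) {ι : Type*} [Fintype ι]
    (x : ι → EuclideanSpace ℂ (Fin d)) (w : ι → ℝ) : Prop :=
  (∀ i, ‖x i‖ = 1) ∧ (∑ i, w i = 1) ∧
    ∑ i, ∑ j, w i * w j * ‖(inner ℂ (x i) (x j) : ℂ)‖ ^ (2 * t) = designConst d t

/-!
Writing `x^{⊗t}` in the orthonormal basis of symmetric tensors indexed by multisets turns a unit
vector `x ∈ ℂ^d` into a unit vector `ψ x` of a space of dimension `D = (t+d-1 choose t)`,
with `⟪ψ x, ψ y⟫ = ⟪x, y⟫^t` by the multinomial theorem. This reduces the claim to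
`t = 1` in dimension `D`. There, in the Hilbert–Schmidt space, the frame operator
`F = ∑ wᵢ uᵢuᵢ*` satisfies `⟪F_X, F_Y⟫ = ∑∑ wᵢ wⱼ |⟪uᵢ, vⱼ⟫|²` and `⟪I, F⟫ = tr F = 1`, so
`‖F_X - I/D‖² = ‖F_X‖² - 1/D`. For a design this vanishes, hence `F_X = I/D` and the cross term
is `⟪I/D, F_Y⟫ = 1/D`.
-/

open Finset
open scoped ComplexConjugate

lemma eq_of_norm_sq_eq_of_re_inner_eq {𝕜 E : Type*} [RCLike 𝕜] [NormedAddCommGroup E]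
    [InnerProductSpace 𝕜 E] {u p : E} (hu : ‖u‖ ^ 2 = ‖p‖ ^ 2)
    (hup : RCLike.re (inner 𝕜 u p) = ‖p‖ ^ 2) : u = p := by
  rw [← sub_eq_zero, ← norm_eq_zero, ← sq_eq_zero_iff, norm_sub_sq (𝕜 := 𝕜), hu, hup]
  ring

section FrameOperator

variable {S ι κ : Type*} [Fintype S] [Fintype ι] [Fintype κ]

noncomputable def outerSelf (u : EuclideanSpace ℂ S) : EuclideanSpace ℂ (S × S) :=
  WithLp.toLp 2 fun p => u p.1 * conj (u p.2)

lemma inner_outerSelf (u v : EuclideanSpace ℂ S) :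
    inner ℂ (outerSelf u) (outerSelf v) = (‖(inner ℂ u v : ℂ)‖ ^ 2 : ℝ) := by
  rw [outerSelf, outerSelf, EuclideanSpace.inner_toLp_toLp, Complex.ofReal_pow, ← Complex.mul_conj',
    EuclideanSpace.inner_eq_star_dotProduct]
  simp only [dotProduct, Fintype.sum_prod_type, map_sum, Finset.sum_mul_sum]
  refine sum_congr rfl fun a _ => sum_congr rfl fun b _ => ?_
  simp only [Pi.star_apply, Complex.star_def, Complex.conj_conj, map_mul]
  ring

noncomputable def frameOperator (u : ι → EuclideanSpace ℂ S) (w : ι → ℝ) :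
    EuclideanSpace ℂ (S × S) :=
  ∑ i, (w i : ℂ) • outerSelf (u i)

lemma inner_frameOperator (u : ι → EuclideanSpace ℂ S) (w : ι → ℝ)
    (v : κ → EuclideanSpace ℂ S) (w' : κ → ℝ) :
    inner ℂ (frameOperator u w) (frameOperator v w') =
      (∑ i, ∑ j, w i * w' j * ‖(inner ℂ (u i) (v j) : ℂ)‖ ^ 2 : ℝ) := by
  simp only [frameOperator, sum_inner, inner_sum, inner_smul_left, inner_smul_right,
    inner_outerSelf, Complex.conj_ofReal]
  push_cast
  simp only [mul_sum]
  rw [sum_comm]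
  exact sum_congr rfl fun i _ => sum_congr rfl fun j _ => by ring

variable [DecidableEq S]

variable (S) in
noncomputable def identityVec : EuclideanSpace ℂ (S × S) :=
  WithLp.toLp 2 fun p => if p.1 = p.2 then 1 else 0

lemma inner_identityVec_outerSelf (u : EuclideanSpace ℂ S) :
    inner ℂ (identityVec S) (outerSelf u) = (‖u‖ ^ 2 : ℝ) := by
  rw [identityVec, outerSelf, EuclideanSpace.inner_toLp_toLp, EuclideanSpace.norm_sq_eq]
  simp [dotProduct, Fintype.sum_prod_type, Complex.mul_conj']

lemma norm_identityVec_sq : ‖identityVec S‖ ^ 2 = Fintype.card S := by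
  simp only [identityVec, EuclideanSpace.norm_sq_eq, Fintype.sum_prod_type]
  simp [apply_ite]

lemma inner_identityVec_frameOperator {u : ι → EuclideanSpace ℂ S} {w : ι → ℝ}
    (hu : ∀ i, ‖u i‖ = 1) (hw : ∑ i, w i = 1) :
    inner ℂ (identityVec S) (frameOperator u w) = 1 := by
  simp only [frameOperator, inner_sum, inner_smul_right, inner_identityVec_outerSelf, hu, one_pow,
    Complex.ofReal_one, mul_one]
  exact_mod_cast hw

lemma frameOperator_eq_inv_card_smul_identityVec {u : ι → EuclideanSpace ℂ S} {w : ι → ℝ}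
    (hu : ∀ i, ‖u i‖ = 1) (hw : ∑ i, w i = 1)
    (hpot : ∑ i, ∑ j, w i * w j * ‖(inner ℂ (u i) (u j) : ℂ)‖ ^ 2 = (Fintype.card S : ℝ)⁻¹) :
    frameOperator u w = (Fintype.card S : ℂ)⁻¹ • identityVec S := by
  have hnorm : ‖(Fintype.card S : ℂ)⁻¹ • identityVec S‖ ^ 2 = (Fintype.card S : ℝ)⁻¹ := by
    rw [norm_smul, mul_pow, norm_identityVec_sq, norm_inv, Complex.norm_natCast, inv_pow,
      ← div_eq_inv_mul, sq, div_self_mul_self']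
  apply eq_of_norm_sq_eq_of_re_inner_eq (𝕜 := ℂ)
  · rw [hnorm, norm_sq_eq_re_inner (𝕜 := ℂ), inner_frameOperator, hpot]
    exact Complex.ofReal_re _
  · rw [hnorm, inner_smul_right, ← inner_conj_symm, inner_identityVec_frameOperator hu hw]
    simp

theorem sum_mul_norm_inner_sq_eq_inv_card {u : ι → EuclideanSpace ℂ S} {w : ι → ℝ}
    (hu : ∀ i, ‖u i‖ = 1) (hw : ∑ i, w i = 1)
    (hpot : ∑ i, ∑ j, w i * w j * ‖(inner ℂ (u i) (u j) : ℂ)‖ ^ 2 = (Fintype.card S : ℝ)⁻¹)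
    {v : κ → EuclideanSpace ℂ S} {w' : κ → ℝ} (hv : ∀ j, ‖v j‖ = 1) (hw' : ∑ j, w' j = 1) :
    ∑ i, ∑ j, w i * w' j * ‖(inner ℂ (u i) (v j) : ℂ)‖ ^ 2 = (Fintype.card S : ℝ)⁻¹ := by
  have h := inner_frameOperator u w v w'
  rw [frameOperator_eq_inv_card_smul_identityVec hu hw hpot, inner_smul_left,
    inner_identityVec_frameOperator hv hw'] at h
  simp only [map_inv₀, Complex.conj_natCast, mul_one] at h
  rw [← Complex.ofReal_natCast, ← Complex.ofReal_inv] at h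
  exact_mod_cast h.symm

end FrameOperator

section SymPow

variable {α : Type*} [Fintype α] [DecidableEq α]

noncomputable def symPow (t : ℕ) (x : EuclideanSpace ℂ α) : EuclideanSpace ℂ (Sym α t) :=
  WithLp.toLp 2 fun s => (√(s.val.countPerms : ℝ) : ℂ) * (s.val.map fun i => x i).prod

lemma inner_symPow (t : ℕ) (x y : EuclideanSpace ℂ α) :
    inner ℂ (symPow t x) (symPow t y) = (inner ℂ x y : ℂ) ^ t := by
  rw [symPow, symPow, EuclideanSpace.inner_toLp_toLp, EuclideanSpace.inner_eq_star_dotProduct]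
  simp only [dotProduct]
  rw [Finset.sum_pow, Finset.sym_univ]
  refine sum_congr rfl fun s _ => ?_
  have hsqrt : (√(s.val.countPerms : ℝ) : ℂ) * √(s.val.countPerms : ℝ) = s.val.countPerms := by
    rw [← Complex.ofReal_mul, Real.mul_self_sqrt (Nat.cast_nonneg _), Complex.ofReal_natCast]
  simp only [Pi.star_apply, star_mul', Complex.star_def, Complex.conj_ofReal, map_multiset_prod,
    Multiset.map_map, Function.comp_def, Multiset.prod_map_mul, ← hsqrt]
  ring

lemma norm_symPow (t : ℕ) (x : EuclideanSpace ℂ α) : ‖symPow t x‖ = ‖x‖ ^ t := by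
  have h := inner_symPow t x x
  rw [inner_self_eq_norm_sq_to_K, inner_self_eq_norm_sq_to_K, ← pow_mul, mul_comm, pow_mul] at h
  exact (pow_left_inj₀ (norm_nonneg _) (by positivity) two_ne_zero).mp (by exact_mod_cast h)

lemma norm_inner_symPow_sq (t : ℕ) (x y : EuclideanSpace ℂ α) :
    ‖(inner ℂ (symPow t x) (symPow t y) : ℂ)‖ ^ 2 = ‖(inner ℂ x y : ℂ)‖ ^ (2 * t) := by
  rw [inner_symPow, norm_pow, ← pow_mul, mul_comm]

end SymPow

lemma designConst_eq_inv_card_sym (d t : ℕ) :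
    designConst d t = (Fintype.card (Sym (Fin d) t) : ℝ)⁻¹ := by
  rw [designConst, one_div, Sym.card_sym_eq_choose, Fintype.card_fin, add_comm]

theorem cross_term_of_weighted_designs_general (d t : ℕ)
    {ι κ : Type*} [Fintype ι] [Fintype κ]
    (x : ι → EuclideanSpace ℂ (Fin d)) (wX : ι → ℝ)
    (y : κ → EuclideanSpace ℂ (Fin d)) (wY : κ → ℝ)
    (hX : IsWeightedDesign d t x wX) (hY : IsWeightedDesign d t y wY) :
    ∑ i, ∑ j, wX i * wY j * ‖(inner ℂ (x i) (y j) : ℂ)‖ ^ (2 * t) =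
      designConst d t := by
  obtain ⟨hx, hwX, hXpot⟩ := hX
  obtain ⟨hy, hwY, -⟩ := hY
  simp only [← norm_inner_symPow_sq, designConst_eq_inv_card_sym] at hXpot ⊢
  exact sum_mul_norm_inner_sq_eq_inv_card (fun i => by rw [norm_symPow, hx, one_pow]) hwX hXpot
    (fun j => by rw [norm_symPow, hy, one_pow]) hwY

/-- For two weighted spherical `(t,t)`-designs, the cross term
`b_{XY}^{(t)} = ∑ i ∑ j w_i^X w_j^Y |⟨x i, y j⟩|^(2t)` equals `c_t(ℂ^d)`. -/
theorem cross_term_of_weighted_designs (d t : ℕ) (hd : 1 ≤ d) (ht : 1 ≤ t)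
    {ι κ : Type*} [Fintype ι] [Fintype κ]
    (x : ι → EuclideanSpace ℂ (Fin d)) (wX : ι → ℝ)
    (y : κ → EuclideanSpace ℂ (Fin d)) (wY : κ → ℝ)
    (hX : IsWeightedDesign d t x wX) (hY : IsWeightedDesign d t y wY) :
    ∑ i, ∑ j, wX i * wY j * ‖(inner ℂ (x i) (y j) : ℂ)‖ ^ (2 * t) =
      designConst d t :=
  cross_term_of_weighted_designs_general d t x wX y wY hX hY
end

section
/- Let d ≥ 1 and t ≥ 1 be integers, and let ((x_i), (w_i))_{i∈I} be a weighted spherical (t,t)-design for ℂ^d. Then for every integer r with 1 ≤ r ≤ t, the same family with the same weights is a weighted spherical (r,r)-design: ∑_{i∈I}∑_{j∈I} w_i w_j |⟨x_i,x_j⟩|^{2r} = c_r(ℂ^d). -/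
open scoped BigOperators

/-
Write `T_n = ∑ᵢ wᵢ (xᵢ xᵢ*)^{⊗n}` and `Π_n` for the orthogonal projection of `(ℂ^d)^{⊗n}` onto
the symmetric tensors, whose trace is `C(n+d-1, n)`. The frame potential at level `n` is the
Hilbert–Schmidt norm `‖T_n‖²`, and `⟪T_n, Π_n⟫ = 1` for unit vectors and weights summing to `1`,
so by Cauchy–Schwarz `‖T_n‖² ≥ 1 / C(n+d-1, n)` with equality iff `T_n = Π_n / C(n+d-1, n)`.
Tracing out one tensor factor sends `T_{n+1}` to `T_n` (the `xᵢ` are unit vectors) and `Π_{n+1}`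
to `(d+n)/(n+1) • Π_n`, so the equality case descends from level `t` to every level `r ≤ t`.
With `S_n = n! Π_n`, whose entries count permutations, the equality case reads
`d(d+1)⋯(d+n-1) • T_n = S_n`.
-/

section

open Finset Equiv
open scoped Nat ComplexConjugate

/-- The hypotheses say exactly that `‖m • u - v‖² = 0`: the equality case of Cauchy–Schwarz. -/
theorem smul_eq_of_norm_sq_eq_inner {𝕜 E : Type*} [RCLike 𝕜] [NormedAddCommGroup E]
    [InnerProductSpace 𝕜 E] {u v : E} {m : ℝ} (hu : m * ‖u‖ ^ 2 = RCLike.re (inner 𝕜 u v))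
    (hv : ‖v‖ ^ 2 = m * RCLike.re (inner 𝕜 u v)) : (m : 𝕜) • u = v := by
  rw [← sub_eq_zero, ← norm_eq_zero, ← sq_eq_zero_iff, norm_sub_sq (𝕜 := 𝕜), norm_smul,
    inner_smul_left]
  simp [RCLike.conj_ofReal, mul_pow, ← hu, hv]
  ring

section PermCount

variable {α : Type*} {n s : ℕ}

lemma cons_comp_decomposeFin_symm_eq_cons_iff (c : α) (a b : Fin s → α) (p : Fin (s + 1))
    (τ : Perm (Fin s)) :
    Fin.cons c a ∘ Perm.decomposeFin.symm (p, τ) = Fin.cons c b ↔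
      (Fin.cons c a : Fin (s + 1) → α) p = c ∧ a ∘ τ = b := by
  rw [funext_iff, Fin.forall_fin_succ, funext_iff]
  simp only [Function.comp_apply, Perm.decomposeFin_symm_apply_zero,
    Perm.decomposeFin_symm_apply_succ, Fin.cons_zero, Fin.cons_succ]
  refine and_congr_right fun hp => forall_congr' fun j => ?_
  rw [apply_swap_eq_self (v := (Fin.cons c a : Fin (s + 1) → α)) (by rw [hp, Fin.cons_zero]),
    Fin.cons_succ]

variable [DecidableEq α]

def permCount (a b : Fin n → α) : ℕ := #{σ : Perm (Fin n) | a ∘ σ = b}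

lemma permCount_comp_perm (a : Fin n → α) (σ : Perm (Fin n)) :
    permCount a (a ∘ σ) = permCount a a := by
  refine card_equiv (Equiv.mulRight σ⁻¹) fun τ => ?_
  simp only [mem_filter, mem_univ, true_and, coe_mulRight, Perm.coe_mul, Perm.inv_def,
    ← Function.comp_assoc, comp_symm_eq]

lemma sum_permCount_sq [Fintype α] (a : Fin n → α) :
    ∑ b, permCount a b ^ 2 = n ! * permCount a a := by
  calc ∑ b, permCount a b ^ 2
      = ∑ b, ∑ σ : Perm (Fin n), if a ∘ σ = b then permCount a b else 0 := by
        simp only [sq, permCount, card_filter, sum_mul, ite_mul, one_mul, zero_mul]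
    _ = ∑ σ : Perm (Fin n), permCount a (a ∘ σ) := by
        rw [sum_comm]; simp only [sum_ite_eq, mem_univ, if_true]
    _ = n ! * permCount a a := by
        simp [permCount_comp_perm, Fintype.card_perm]

lemma permCount_cons (c : α) (a b : Fin s → α) :
    permCount (Fin.cons c a : Fin (s + 1) → α) (Fin.cons c b) =
      #{p | (Fin.cons c a : Fin (s + 1) → α) p = c} * permCount a b := by
  rw [permCount, permCount, ← card_product]
  symm
  refine card_equiv Perm.decomposeFin.symm fun ⟨p, τ⟩ => ?_
  simp [cons_comp_decomposeFin_symm_eq_cons_iff]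

variable [Fintype α]

lemma sum_card_filter_cons_apply_eq (a : Fin s → α) :
    ∑ c, #{p | (Fin.cons c a : Fin (s + 1) → α) p = c} = Fintype.card α + s := by
  simp only [card_filter]
  rw [sum_comm, Fin.sum_univ_succ]
  simp [Fin.cons_succ, sum_ite_eq]

lemma sum_permCount_cons (a b : Fin s → α) :
    ∑ c, permCount (Fin.cons c a : Fin (s + 1) → α) (Fin.cons c b) =
      (Fintype.card α + s) * permCount a b := by
  simp only [permCount_cons, ← sum_mul, sum_card_filter_cons_apply_eq]

lemma sum_permCount_self (n : ℕ) :
    ∑ a : Fin n → α, permCount a a = (Fintype.card α).ascFactorial n := by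
  induction n with
  | zero => simp [permCount, Subsingleton.elim _ (default : Fin 0 → α)]
  | succ s ih =>
    rw [← (Fin.consEquiv fun _ => α).sum_comp, Fintype.sum_prod_type, sum_comm]
    simp only [Fin.consEquiv, coe_fn_mk, sum_permCount_cons, ← mul_sum, ih,
      Nat.ascFactorial_succ]

lemma sum_sum_permCount_sq :
    ∑ a : Fin n → α, ∑ b, permCount a b ^ 2 = n ! * (Fintype.card α).ascFactorial n := by
  simp only [sum_permCount_sq, ← mul_sum, sum_permCount_self]

end PermCount

lemma designConst_eq (d n : ℕ) : designConst d n = n ! / d.ascFactorial n := by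
  rw [designConst, Nat.ascFactorial_eq_factorial_mul_choose', Nat.cast_mul, add_comm d n,
    div_mul_cancel_left₀ (by positivity), one_div]

/-- Operators on `(ℂ^d)^{⊗n}` as matrices indexed by pairs of multi-indices, with the
Hilbert–Schmidt inner product. -/
abbrev TensorEnd (d n : ℕ) := EuclideanSpace ℂ ((Fin n → Fin d) × (Fin n → Fin d))

variable {d n s : ℕ} {ι : Type*} [Fintype ι]

lemma ascFactorial_pos_of_pos (hd : 0 < d) (n : ℕ) : 0 < d.ascFactorial n :=
  (pow_pos hd n).trans_le (Nat.pow_succ_le_ascFactorial d n)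

noncomputable def outerTensorPow (x : EuclideanSpace ℂ (Fin d)) (n : ℕ) : TensorEnd d n :=
  WithLp.toLp 2 fun p => (∏ k, x (p.1 k)) * conj (∏ k, x (p.2 k))

noncomputable def frameTensor (x : ι → EuclideanSpace ℂ (Fin d)) (w : ι → ℝ) (n : ℕ) :
    TensorEnd d n :=
  ∑ i, (w i : ℂ) • outerTensorPow (x i) n

/-- `n!` times the orthogonal projection of `(ℂ^d)^{⊗n}` onto its symmetric subspace. -/
noncomputable def symmetrizer (d n : ℕ) : TensorEnd d n :=
  WithLp.toLp 2 fun p => (permCount p.1 p.2 : ℂ)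

lemma sum_conj_prod_mul_prod (x y : EuclideanSpace ℂ (Fin d)) (n : ℕ) :
    ∑ a : Fin n → Fin d, conj (∏ k, x (a k)) * ∏ k, y (a k) = inner ℂ x y ^ n := by
  simp only [map_prod, ← prod_mul_distrib, PiLp.inner_apply, RCLike.inner_apply',
    Fintype.sum_pow]

lemma inner_outerTensorPow (x y : EuclideanSpace ℂ (Fin d)) :
    inner ℂ (outerTensorPow x n) (outerTensorPow y n) = (‖inner ℂ x y‖ ^ (2 * n) : ℝ) := by
  have h := sum_conj_prod_mul_prod x y n
  rw [outerTensorPow, outerTensorPow, PiLp.inner_apply]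
  simp only [RCLike.inner_apply', Fintype.sum_prod_type]
  calc _ = (∑ a : Fin n → Fin d, conj (∏ k, x (a k)) * ∏ k, y (a k)) *
        conj (∑ b : Fin n → Fin d, conj (∏ k, x (b k)) * ∏ k, y (b k)) := by
        simp only [sum_mul_sum, map_sum, map_mul, Complex.conj_conj]
        refine sum_congr rfl fun a _ => sum_congr rfl fun b _ => by ring
    _ = _ := by
        rw [h, Complex.mul_conj, Complex.normSq_eq_norm_sq, norm_pow, ← pow_mul, mul_comm]

lemma norm_frameTensor_sq (x : ι → EuclideanSpace ℂ (Fin d)) (w : ι → ℝ) (n : ℕ) :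
    ‖frameTensor x w n‖ ^ 2 = ∑ i, ∑ j, w i * w j * ‖inner ℂ (x i) (x j)‖ ^ (2 * n) := by
  rw [@norm_sq_eq_re_inner ℂ, frameTensor]
  simp only [sum_inner, inner_sum, inner_smul_left, inner_smul_right, inner_outerTensorPow,
    Complex.conj_ofReal, ← Complex.ofReal_mul, ← Complex.ofReal_sum, mul_sum]
  rw [RCLike.re_to_complex, Complex.ofReal_re, sum_comm]
  refine sum_congr rfl fun i _ => sum_congr rfl fun j _ => ?_
  rw [norm_inner_symm]
  ring

lemma inner_outerTensorPow_symmetrizer (x : EuclideanSpace ℂ (Fin d)) :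
    inner ℂ (outerTensorPow x n) (symmetrizer d n) = n ! * ‖x‖ ^ (2 * n) := by
  have hσ (σ : Perm (Fin n)) :
      ∑ a : Fin n → Fin d, conj (∏ k, x (a k)) * ∏ k, x (a (σ k)) = ‖x‖ ^ (2 * n) := by
    simp only [fun a : Fin n → Fin d => Equiv.prod_comp σ (fun k => x (a k)),
      sum_conj_prod_mul_prod, inner_self_eq_norm_sq_to_K, pow_mul]
    rfl
  calc inner ℂ (outerTensorPow x n) (symmetrizer d n)
      = ∑ a : Fin n → Fin d, ∑ σ : Perm (Fin n), ∑ b : Fin n → Fin d,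
          if a ∘ σ = b then conj (∏ k, x (a k)) * ∏ k, x (b k) else 0 := by
        rw [PiLp.inner_apply, Fintype.sum_prod_type]
        refine sum_congr rfl fun a _ => ?_
        rw [sum_comm]
        refine sum_congr rfl fun b _ => ?_
        simp only [outerTensorPow, symmetrizer, permCount, card_filter, RCLike.inner_apply',
          map_mul, Complex.conj_conj, Nat.cast_sum, Nat.cast_ite, Nat.cast_one, Nat.cast_zero,
          mul_sum, mul_ite, mul_one, mul_zero]
    _ = n ! * ‖x‖ ^ (2 * n) := by
        simp only [sum_ite_eq, mem_univ, if_true, Function.comp_apply]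
        rw [sum_comm]
        simp only [hσ, sum_const, card_univ, Fintype.card_perm, Fintype.card_fin, nsmul_eq_mul]

lemma inner_frameTensor_symmetrizer {x : ι → EuclideanSpace ℂ (Fin d)} {w : ι → ℝ}
    (hx : ∀ i, ‖x i‖ = 1) (hw : ∑ i, w i = 1) :
    inner ℂ (frameTensor x w n) (symmetrizer d n) = n ! := by
  simp only [frameTensor, sum_inner, inner_smul_left, inner_outerTensorPow_symmetrizer, hx,
    Complex.conj_ofReal, one_pow, mul_one, ← sum_mul, ← Complex.ofReal_sum, hw,
    Complex.ofReal_one, one_mul]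

lemma norm_symmetrizer_sq (d n : ℕ) : ‖symmetrizer d n‖ ^ 2 = n ! * d.ascFactorial n := by
  rw [EuclideanSpace.norm_sq_eq, Fintype.sum_prod_type]
  simp only [symmetrizer, PiLp.toLp_apply, Complex.norm_natCast]
  exact_mod_cast Fintype.card_fin d ▸ sum_sum_permCount_sq (α := Fin d) (n := n)

lemma frameTensor_apply (x : ι → EuclideanSpace ℂ (Fin d)) (w : ι → ℝ) (n : ℕ)
    (p : (Fin n → Fin d) × (Fin n → Fin d)) :
    frameTensor x w n p = ∑ i, (w i : ℂ) * outerTensorPow (x i) n p := by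
  simp [frameTensor]

lemma sum_outerTensorPow_cons (x : EuclideanSpace ℂ (Fin d)) (a b : Fin s → Fin d) :
    ∑ c, outerTensorPow x (s + 1) (Fin.cons c a, Fin.cons c b) =
      ‖x‖ ^ 2 * outerTensorPow x s (a, b) := by
  simp only [outerTensorPow, PiLp.toLp_apply, Fin.prod_univ_succ, Fin.cons_zero, Fin.cons_succ]
  rw [← Complex.ofReal_pow, EuclideanSpace.norm_sq_eq, Complex.ofReal_sum, sum_mul]
  refine sum_congr rfl fun c _ => ?_
  rw [Complex.ofReal_pow, ← Complex.mul_conj', map_mul]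
  ring

lemma sum_frameTensor_cons {x : ι → EuclideanSpace ℂ (Fin d)} (hx : ∀ i, ‖x i‖ = 1)
    (w : ι → ℝ) (a b : Fin s → Fin d) :
    ∑ c, frameTensor x w (s + 1) (Fin.cons c a, Fin.cons c b) = frameTensor x w s (a, b) := by
  simp only [frameTensor_apply]
  rw [sum_comm]
  simp only [← mul_sum, sum_outerTensorPow_cons, hx]
  simp

lemma sum_symmetrizer_cons (a b : Fin s → Fin d) :
    ∑ c, symmetrizer d (s + 1) (Fin.cons c a, Fin.cons c b) =
      (d + s) * symmetrizer d s (a, b) := by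
  simp only [symmetrizer, PiLp.toLp_apply]
  exact_mod_cast Fintype.card_fin d ▸ sum_permCount_cons (α := Fin d) a b

variable {x : ι → EuclideanSpace ℂ (Fin d)} {w : ι → ℝ}

lemma ascFactorial_smul_frameTensor_of_isWeightedDesign (hd : 0 < d)
    (h : IsWeightedDesign d n x w) :
    (d.ascFactorial n : ℂ) • frameTensor x w n = symmetrizer d n := by
  obtain ⟨hx, hw, hF⟩ := h
  have hasc : (d.ascFactorial n : ℝ) ≠ 0 := by exact_mod_cast (ascFactorial_pos_of_pos hd n).ne'
  have hinner : RCLike.re (inner ℂ (frameTensor x w n) (symmetrizer d n)) = n ! := by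
    rw [inner_frameTensor_symmetrizer hx hw, RCLike.natCast_re]
  have := smul_eq_of_norm_sq_eq_inner (𝕜 := ℂ) (m := d.ascFactorial n) (u := frameTensor x w n)
    (v := symmetrizer d n) ?_ ?_
  · rwa [RCLike.ofReal_natCast] at this
  · rw [norm_frameTensor_sq, hF, designConst_eq, hinner]
    field_simp
  · rw [norm_symmetrizer_sq, hinner, mul_comm]

lemma ascFactorial_smul_frameTensor_of_succ (hd : 0 < d) (hx : ∀ i, ‖x i‖ = 1)
    (h : (d.ascFactorial (s + 1) : ℂ) • frameTensor x w (s + 1) = symmetrizer d (s + 1)) :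
    (d.ascFactorial s : ℂ) • frameTensor x w s = symmetrizer d s := by
  ext ⟨a, b⟩
  have hsum := congrArg (fun T : TensorEnd d (s + 1) => ∑ c, T (Fin.cons c a, Fin.cons c b)) h
  simp only [PiLp.smul_apply, smul_eq_mul, ← mul_sum, sum_frameTensor_cons hx,
    sum_symmetrizer_cons, Nat.ascFactorial_succ, Nat.cast_mul, Nat.cast_add, mul_assoc] at hsum
  have hds : (d + s : ℂ) ≠ 0 := by exact_mod_cast (by omega : d + s ≠ 0)
  exact mul_left_cancel₀ hds hsum

lemma norm_frameTensor_sq_of_ascFactorial_smul (hd : 0 < d)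
    (h : (d.ascFactorial n : ℂ) • frameTensor x w n = symmetrizer d n) :
    ‖frameTensor x w n‖ ^ 2 = designConst d n := by
  have hasc : (d.ascFactorial n : ℝ) ≠ 0 := by exact_mod_cast (ascFactorial_pos_of_pos hd n).ne'
  have hnorm := congrArg (‖·‖ ^ 2) h
  simp only [norm_smul, Complex.norm_natCast, mul_pow, norm_symmetrizer_sq] at hnorm
  rw [designConst_eq, eq_div_iff hasc]
  apply mul_left_cancel₀ hasc
  linear_combination hnorm

end

theorem weighted_design_of_le_general (d t : ℕ) (hd : 1 ≤ d)
    {ι : Type*} [Fintype ι]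
    (x : ι → EuclideanSpace ℂ (Fin d)) (w : ι → ℝ)
    (h : IsWeightedDesign d t x w) (r : ℕ) (hrt : r ≤ t) :
    ∑ i, ∑ j, w i * w j * ‖(inner ℂ (x i) (x j) : ℂ)‖ ^ (2 * r) =
      designConst d r := by
  rw [← norm_frameTensor_sq]
  refine norm_frameTensor_sq_of_ascFactorial_smul hd ?_
  induction hrt using Nat.decreasingInduction with
  | self => exact ascFactorial_smul_frameTensor_of_isWeightedDesign hd h
  | of_succ s _ ih => exact ascFactorial_smul_frameTensor_of_succ hd h.1 ih

/-- A weighted spherical `(t,t)`-design is a weighted spherical `(r,r)`-design for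
every `1 ≤ r ≤ t`. -/
theorem weighted_design_of_le (d t : ℕ) (hd : 1 ≤ d) (ht : 1 ≤ t)
    {ι : Type*} [Fintype ι]
    (x : ι → EuclideanSpace ℂ (Fin d)) (w : ι → ℝ)
    (h : IsWeightedDesign d t x w) (r : ℕ) (hr1 : 1 ≤ r) (hrt : r ≤ t) :
    ∑ i, ∑ j, w i * w j * ‖(inner ℂ (x i) (x j) : ℂ)‖ ^ (2 * r) =
      designConst d r :=
  weighted_design_of_le_general d t hd x w h r hrt
end
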